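/- arXiv:1111.1292 — 9 statements merged into one kernel-verified Lean document; each statement's English description precedes it below -/
import Mathlib

section
/- Let R be a unital associative ring, σ : R → R a ring endomorphism, δ : R → R a σ-derivation, and define maps π_m^n : R → R for m, n ∈ ℤ by: π_0^0 = id_R; π_m^n = 0 whenever m, n are non-negative with m > n, or at least one of m, n is negative; and π_m^n = σ ∘ π_{m-1}^{n-1} + δ ∘ π_m^{n-1} in the remaining cases. Then an element Σ_{i=0}^n a_i x^i of the Ore extension R[x;σ,δ] belongs to the centralizer of R in R[x;σ,δ] if and only if r a_i = Σ_{j=i}^n a_j π_i^j(r) holds for all i ∈ {0, …, n} and all r ∈ R. -/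
/-- `δ` is a `σ`-derivation of `R`: it is additive and satisfies the twisted Leibniz rule
`δ(ab) = σ(a)δ(b) + δ(a)b`. -/
def IsSigmaDerivation {R : Type*} [Ring R] (σ : R →+* R) (δ : R → R) : Prop :=
  (∀ a b : R, δ (a + b) = δ a + δ b) ∧ ∀ a b : R, δ (a * b) = σ a * δ b + δ a * b

/-- `S`, together with the ring morphism `f : R →+* S` and the element `x : S`, is an Ore
extension `R[x;σ,δ]`: the powers `1, x, x², …` form a basis of `S` as a left `R`-module
(i.e. every element of `S` is, in a unique way, a finite sum `Σᵢ f(aᵢ) xⁱ`), and the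
commutation rule `x·r = σ(r)·x + δ(r)` holds for all `r ∈ R`. -/
structure IsOreExtension {R S : Type*} [Ring R] [Ring S]
    (σ : R →+* R) (δ : R → R) (f : R →+* S) (x : S) : Prop where
  basis : Function.Bijective fun a : ℕ →₀ R => a.sum fun i r => f r * x ^ i
  rel : ∀ r : R, x * f r = f (σ r) * x + f (δ r)

/-- `R` is `σ`-`δ`-simple: the only two-sided ideals `J` of `R` with `σ(J) ⊆ J` and
`δ(J) ⊆ J` are `{0}` and `R`. -/
def IsSigmaDeltaSimple {R : Type*} [Ring R] (σ : R →+* R) (δ : R → R) : Prop :=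
  ∀ J : TwoSidedIdeal R, (∀ a ∈ J, σ a ∈ J) → (∀ a ∈ J, δ a ∈ J) → J = ⊥ ∨ J = ⊤

/-- `R` is `δ`-simple: the only two-sided ideals `J` of `R` with `δ(J) ⊆ J` are `{0}`
and `R`. -/
def IsDeltaSimple {R : Type*} [Ring R] (δ : R → R) : Prop :=
  ∀ J : TwoSidedIdeal R, (∀ a ∈ J, δ a ∈ J) → J = ⊥ ∨ J = ⊤

/-- The maps `π m n : R → R` (the nonnegative part of the family `π_m^n`, `m, n ∈ ℤ`;
all values with a negative index are `0` and are inlined in the recursion below):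
`π 0 0 = id`, `π m n = 0` for `m > n`, and otherwise
`π m n = σ ∘ π (m-1) (n-1) + δ ∘ π m (n-1)`. -/
def orePi {R : Type*} [Ring R] (σ : R →+* R) (δ : R → R) : ℕ → ℕ → R → R
  | 0, 0 => id
  | _ + 1, 0 => fun _ => 0
  | 0, n + 1 => fun r => δ (orePi σ δ 0 n r)
  | m + 1, n + 1 =>
      if m + 1 > n + 1 then fun _ => 0
      else fun r => σ (orePi σ δ m n r) + δ (orePi σ δ (m + 1) n r)

section
variable {R S : Type*} [Ring R] [Ring S] (σ : R →+* R) (δ : R → R)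

lemma orePi_zero_of_lt : ∀ m k : ℕ, k < m → ∀ r : R, orePi σ δ m k r = 0
  | m + 1, 0, _, r => rfl
  | m + 1, k + 1, h, r => by
      rw [orePi, if_pos (show m + 1 > k + 1 from h)]

lemma orePi_succ (m k : ℕ) (h : m ≤ k) (r : R) :
    orePi σ δ (m + 1) (k + 1) r = σ (orePi σ δ m k r) + δ (orePi σ δ (m + 1) k r) := by
  rw [orePi, if_neg (by omega)]

end

section
variable {R S : Type*} [Ring R] [Ring S] {σ : R →+* R} {δ : R → R} {f : R →+* S} {x : S}

lemma delta_zero (hδ : IsSigmaDerivation σ δ) : δ 0 = 0 := by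
  have := hδ.1 0 0
  simpa using this.symm

lemma pow_mul_f (hδ : IsSigmaDerivation σ δ) (hS : IsOreExtension σ δ f x) :
    ∀ (k : ℕ) (r : R),
      x ^ k * f r = ∑ m ∈ Finset.range (k + 1), f (orePi σ δ m k r) * x ^ m := by
  intro k
  induction k with
  | zero => intro r; simp [orePi]
  | succ k ih =>
    intro r
    have hext : x ^ k * f r
        = ∑ m ∈ Finset.range (k + 2), f (orePi σ δ m k r) * x ^ m := by
      rw [Finset.sum_range_succ, orePi_zero_of_lt σ δ (k+1) k (Nat.lt_succ_self k)]
      simpa using ih r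
    calc x ^ (k+1) * f r = x * (x ^ k * f r) := by rw [pow_succ', mul_assoc]
      _ = ∑ m ∈ Finset.range (k + 2), x * (f (orePi σ δ m k r) * x ^ m) := by
          rw [hext, Finset.mul_sum]
      _ = ∑ m ∈ Finset.range (k + 2),
            (f (σ (orePi σ δ m k r)) * x ^ (m+1) + f (δ (orePi σ δ m k r)) * x ^ m) := by
          refine Finset.sum_congr rfl fun m _ => ?_
          rw [← mul_assoc, hS.rel, add_mul, mul_assoc, ← pow_succ']
      _ = (∑ m ∈ Finset.range (k + 2), f (σ (orePi σ δ m k r)) * x ^ (m+1))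
          + ∑ m ∈ Finset.range (k + 2), f (δ (orePi σ δ m k r)) * x ^ m := by
          rw [Finset.sum_add_distrib]
      _ = ∑ m ∈ Finset.range (k + 2), f (orePi σ δ m (k+1) r) * x ^ m := by
          rw [Finset.sum_range_succ (fun m => f (σ (orePi σ δ m k r)) * x ^ (m+1)),
            orePi_zero_of_lt σ δ (k+1) k (Nat.lt_succ_self k)]
          simp only [map_zero, zero_mul, add_zero]
          rw [Finset.sum_range_succ' (fun m => f (δ (orePi σ δ m k r)) * x ^ m),
            Finset.sum_range_succ' (fun m => f (orePi σ δ m (k+1) r) * x ^ m)]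
          have h0 : orePi σ δ 0 (k+1) r = δ (orePi σ δ 0 k r) := rfl
          rw [← add_assoc, ← Finset.sum_add_distrib]
          congr 1
          refine Finset.sum_congr rfl fun m hm => ?_
          rw [orePi_succ σ δ m k (Nat.lt_succ_iff.mp (Finset.mem_range.mp hm)), map_add,
            add_mul]

lemma coeff_inj (hS : IsOreExtension σ δ f x) (N : ℕ) (b c : ℕ → R)
    (h : ∑ i ∈ Finset.range N, f (b i) * x ^ i = ∑ i ∈ Finset.range N, f (c i) * x ^ i) :
    ∀ i < N, b i = c i := by
  classical
  set B : ℕ →₀ R := Finsupp.onFinset (Finset.range N)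
    (fun i => if i < N then b i else 0)
    (fun i hi => by by_contra hc; simp [Finset.mem_range] at hc; simp [hc] at hi) with hB
  set C : ℕ →₀ R := Finsupp.onFinset (Finset.range N)
    (fun i => if i < N then c i else 0)
    (fun i hi => by by_contra hc; simp [Finset.mem_range] at hc; simp [hc] at hi) with hC
  have hBsum : (B.sum fun i r => f r * x ^ i) = ∑ i ∈ Finset.range N, f (b i) * x ^ i := by
    rw [Finsupp.sum_of_support_subset B Finsupp.support_onFinset_subset _
      (fun i _ => by simp)]
    refine Finset.sum_congr rfl fun i hi => ?_
    simp [hB, Finsupp.onFinset, Finset.mem_range.mp hi]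
  have hCsum : (C.sum fun i r => f r * x ^ i) = ∑ i ∈ Finset.range N, f (c i) * x ^ i := by
    rw [Finsupp.sum_of_support_subset C Finsupp.support_onFinset_subset _
      (fun i _ => by simp)]
    refine Finset.sum_congr rfl fun i hi => ?_
    simp [hC, Finsupp.onFinset, Finset.mem_range.mp hi]
  have hBC : B = C := hS.basis.injective (by simpa [hBsum, hCsum] using h)
  intro i hi
  have := DFunLike.congr_fun hBC i
  simpa [hB, hC, Finsupp.onFinset, hi] using this

end

/-- An element `Σ_{i=0}^n aᵢ xⁱ` of the Ore extension `R[x;σ,δ]` belongs to the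
centralizer of `R` in `R[x;σ,δ]` if and only if `r aᵢ = Σ_{j=i}^n aⱼ π_i^j(r)` for all
`i ∈ {0, …, n}` and all `r ∈ R`. -/
theorem stmt_0 {R S : Type*} [Ring R] [Ring S] (σ : R →+* R) (δ : R → R)
    (hδ : IsSigmaDerivation σ δ) (f : R →+* S) (x : S)
    (hS : IsOreExtension σ δ f x) (n : ℕ) (a : ℕ → R) :
    (∑ i ∈ Finset.range (n + 1), f (a i) * x ^ i) ∈
        Subring.centralizer (Set.range f) ↔
      ∀ i ≤ n, ∀ r : R, r * a i = ∑ j ∈ Finset.Icc i n, a j * orePi σ δ i j r := by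
  classical
  set P := ∑ i ∈ Finset.range (n+1), f (a i) * x ^ i with hP
  have hleft : ∀ r : R, f r * P = ∑ i ∈ Finset.range (n+1), f (r * a i) * x ^ i := by
    intro r; rw [hP, Finset.mul_sum]
    exact Finset.sum_congr rfl fun i _ => by rw [← mul_assoc, ← map_mul]
  have hright : ∀ r : R, P * f r
      = ∑ m ∈ Finset.range (n+1),
          f (∑ j ∈ Finset.Icc m n, a j * orePi σ δ m j r) * x ^ m := by
    intro r
    rw [hP, Finset.sum_mul]
    have h1 : ∀ i ∈ Finset.range (n+1),
        f (a i) * x ^ i * f r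
          = ∑ m ∈ Finset.range (n+1), f (a i * orePi σ δ m i r) * x ^ m := by
      intro i hi
      rw [mul_assoc, pow_mul_f hδ hS, Finset.mul_sum]
      rw [Finset.sum_subset (Finset.range_subset_range.mpr (Finset.mem_range.mp hi))
        (fun m hm hm2 => by
          rw [orePi_zero_of_lt σ δ m i
            (by simp only [Finset.mem_range] at hm hm2; omega)]
          simp)]
      exact Finset.sum_congr rfl fun m _ => by rw [← mul_assoc, ← map_mul]
    rw [Finset.sum_congr rfl h1, Finset.sum_comm]
    refine Finset.sum_congr rfl fun m hm => ?_
    rw [← Finset.sum_mul, ← map_sum]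
    congr 2
    refine (Finset.sum_subset (fun j hj => Finset.mem_range.mpr
      (by simp only [Finset.mem_Icc] at hj; omega)) fun j hj hj2 => ?_).symm
    rw [orePi_zero_of_lt σ δ m j
      (by simp only [Finset.mem_range, Finset.mem_Icc] at hj hj2; omega)]
    simp
  rw [Subring.mem_centralizer_iff]
  constructor
  · intro h i hi r
    have hc : f r * P = P * f r := h (f r) ⟨r, rfl⟩
    rw [hleft, hright] at hc
    exact coeff_inj hS (n+1) _ _ hc i (by omega)
  · rintro h - ⟨r, rfl⟩
    rw [hleft, hright]
    exact Finset.sum_congr rfl fun i hi => by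
      rw [h i (Nat.lt_succ_iff.mp (Finset.mem_range.mp hi)) r]
end

section
/- Let R be a commutative domain and σ : R → R a ring endomorphism. Then R is a maximal commutative subring of the skew polynomial ring R[x;σ,0] if and only if σ has infinite order, i.e. σ^n ≠ id_R for every positive integer n. -/
section

variable {R S : Type*} [Ring S]

def skewSum [Ring R] (f : R →+* S) (x : S) (a : ℕ →₀ R) : S :=
  a.sum fun i r => f r * x ^ i

theorem skewSum_single [Ring R] (f : R →+* S) (x : S) (i : ℕ) (r : R) :
    skewSum f x (Finsupp.single i r) = f r * x ^ i :=
  Finsupp.sum_single_index (by rw [map_zero, zero_mul])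

theorem map_mul_skewSum [Ring R] (f : R →+* S) (x : S) (r : R) (a : ℕ →₀ R) :
    f r * skewSum f x a = skewSum f x (a.mapRange (r * ·) (mul_zero r)) := by
  unfold skewSum
  rw [Finsupp.sum_mapRange_index (fun i => by rw [map_zero, zero_mul]), Finsupp.mul_sum]
  exact Finsupp.sum_congr fun i _ => by rw [map_mul, mul_assoc]

theorem skewSum_eq_map_of_coeff_eq_zero [Ring R] (f : R →+* S) (x : S) {a : ℕ →₀ R}
    (ha : ∀ i, i ≠ 0 → a i = 0) : skewSum f x a = f (a 0) := by
  rw [skewSum, Finsupp.sum_eq_single 0 (fun i _ hi => by rw [ha i hi, map_zero, zero_mul])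
    (fun _ => by rw [map_zero, zero_mul]), pow_zero, mul_one]

theorem RingHom.range_le_centralizer_range [CommRing R] (f : R →+* S) :
    f.range ≤ Subring.centralizer (Set.range f) := by
  rintro _ ⟨c, rfl⟩ _ ⟨r, rfl⟩
  rw [← map_mul, ← map_mul, mul_comm]

namespace IsOreExtension

theorem skewSum_bijective [Ring R] {σ : R →+* R} {δ : R → R} {f : R →+* S} {x : S}
    (hS : IsOreExtension σ δ f x) : Function.Bijective (skewSum f x) :=
  hS.basis

theorem pow_notMem_range [Ring R] [Nontrivial R] {σ : R →+* R} {δ : R → R} {f : R →+* S}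
    {x : S} (hS : IsOreExtension σ δ f x) {n : ℕ} (hn : n ≠ 0) : x ^ n ∉ f.range := by
  rintro ⟨c, hc⟩
  have hsingle : Finsupp.single 0 c = Finsupp.single n (1 : R) :=
    hS.skewSum_bijective.injective <| by
      rw [skewSum_single, skewSum_single, hc, pow_zero, mul_one, map_one, one_mul]
  rcases Finsupp.single_eq_single_iff _ _ _ _ |>.mp hsingle with ⟨h0, -⟩ | ⟨-, h1⟩
  · exact hn h0.symm
  · exact one_ne_zero h1

section Ring

variable [Ring R] {σ : R →+* R} {f : R →+* S} {x : S}
  (hS : IsOreExtension σ (fun _ => (0 : R)) f x)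
include hS

theorem pow_mul_map (i : ℕ) (r : R) : x ^ i * f r = f ((⇑σ)^[i] r) * x ^ i := by
  induction i generalizing r with
  | zero => simp
  | succ n ih =>
    have hx : x * f r = f (σ r) * x := by simpa using hS.rel r
    rw [pow_succ, mul_assoc, hx, ← mul_assoc, ih, Function.iterate_succ_apply, mul_assoc,
      ← pow_succ]

theorem pow_mem_centralizer {n : ℕ} (hn : (⇑σ)^[n] = id) :
    x ^ n ∈ Subring.centralizer (Set.range f) := by
  rintro _ ⟨r, rfl⟩
  rw [hS.pow_mul_map, hn, id]

theorem skewSum_mul_map (a : ℕ →₀ R) (r : R) :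
    skewSum f x a * f r = skewSum f x (Finsupp.onFinset a.support (fun i => a i * (⇑σ)^[i] r)
      fun i h => Finsupp.mem_support_iff.2 fun h0 => h (by rw [h0, zero_mul])) := by
  unfold skewSum
  rw [Finsupp.sum_of_support_subset _ Finsupp.support_onFinset_subset _
    (fun i _ => by rw [map_zero, zero_mul]), Finsupp.sum_mul, Finsupp.sum]
  refine Finset.sum_congr rfl fun i _ => ?_
  rw [Finsupp.onFinset_apply, map_mul, mul_assoc, mul_assoc, hS.pow_mul_map]

theorem mul_coeff_eq_of_commute {a : ℕ →₀ R} {r : R} (h : Commute (f r) (skewSum f x a))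
    (i : ℕ) : r * a i = a i * (⇑σ)^[i] r := by
  have hcoeff := hS.skewSum_bijective.injective <|
    (map_mul_skewSum f x r a).symm.trans (h.eq.trans (hS.skewSum_mul_map a r))
  simpa using DFunLike.congr_fun hcoeff i

end Ring

variable [CommRing R] [IsDomain R] {σ : R →+* R} {f : R →+* S} {x : S}
  (hS : IsOreExtension σ (fun _ => (0 : R)) f x)
include hS

theorem coeff_eq_zero_of_commute {a : ℕ →₀ R} {r : R}
    (h : Commute (f r) (skewSum f x a)) {i : ℕ} (hr : (⇑σ)^[i] r ≠ r) : a i = 0 := by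
  have hcomm := hS.mul_coeff_eq_of_commute h i
  have : a i * ((⇑σ)^[i] r - r) = 0 := by rw [mul_sub, ← hcomm, mul_comm, sub_self]
  exact (mul_eq_zero.mp this).resolve_right (sub_ne_zero.mpr hr)

theorem centralizer_range_le_range (hσ : ∀ n : ℕ, 0 < n → (⇑σ)^[n] ≠ id) :
    Subring.centralizer (Set.range f) ≤ f.range := by
  intro s hs
  obtain ⟨a, rfl⟩ := hS.skewSum_bijective.surjective s
  have hcoeff (i : ℕ) (hi : i ≠ 0) : a i = 0 := by
    obtain ⟨r, hr⟩ := Function.ne_iff.mp (hσ i (Nat.pos_of_ne_zero hi))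
    exact hS.coeff_eq_zero_of_commute (hs (f r) ⟨r, rfl⟩) hr
  exact ⟨a 0, (skewSum_eq_map_of_coeff_eq_zero f x hcoeff).symm⟩

end IsOreExtension

end

/-- For a commutative domain `R`, `R` is a maximal commutative subring of the skew
polynomial ring `R[x;σ,0]` if and only if `σ` has infinite order. -/
theorem stmt_2 {R S : Type*} [CommRing R] [IsDomain R] [Ring S] (σ : R →+* R)
    (f : R →+* S) (x : S)
    (hS : IsOreExtension σ (fun _ => (0 : R)) f x) :
    Subring.centralizer (Set.range f) = f.range ↔
      ∀ n : ℕ, 0 < n → (⇑σ)^[n] ≠ id := by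
  refine ⟨fun hcent n hn hσn => ?_, fun hσ => ?_⟩
  · exact hS.pow_notMem_range hn.ne' (hcent ▸ hS.pow_mem_centralizer hσn)
  · exact le_antisymm (hS.centralizer_range_le_range hσ) f.range_le_centralizer_range
end

section
/- Let R be a commutative domain of characteristic zero and δ : R → R a derivation. If δ is non-zero, then R is a maximal commutative subring of the differential polynomial ring R[x;id_R,δ]. -/
/-! Write `s = Σ aᵢ xⁱ` with `aₙ ≠ 0`, `n ≥ 1`, and pick `r` with `δ r ≠ 0`. Since left
multiplication by `x` is right multiplication by `x` plus the commuting operator `[x, -]`, the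
binomial theorem gives `xⁿ r = Σₘ C(n, m) δⁿ⁻ᵐ(r) xᵐ`; hence the coefficient of `xⁿ⁻¹` in `s r - r s`
is `n aₙ δ(r)`, which is non-zero in a domain of characteristic zero. So `s` does not commute
with `r`. -/

open Finset

theorem pow_mul_sub_mul_pow_eq_sum {S : Type*} [Ring S] (x : S) (y : ℕ → S)
    (hy : ∀ k, x * y k - y k * x = y (k + 1)) (n : ℕ) :
    x ^ n * y 0 - y 0 * x ^ n = ∑ m ∈ range n, n.choose m • (y (n - m) * x ^ m) := by
  set D := LinearMap.mulLeft ℤ x - LinearMap.mulRight ℤ x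
  have hD : ∀ k, (D ^ k) (y 0) = y k := by
    intro k
    induction k with
    | zero => rfl
    | succ k ih => rw [pow_succ', Module.End.mul_apply, ih]; exact hy k
  have hcomm : Commute (LinearMap.mulRight ℤ x) D :=
    (LinearMap.commute_mulLeft_right x x).symm.sub_right (Commute.refl _)
  have hleibniz : x ^ n * y 0 = ∑ m ∈ range (n + 1), n.choose m • (y (n - m) * x ^ m) := by
    rw [← LinearMap.mulLeft_apply (R := ℤ), ← LinearMap.pow_mulLeft,
      ← add_sub_cancel (LinearMap.mulRight ℤ x) (LinearMap.mulLeft ℤ x), hcomm.add_pow]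
    simp only [LinearMap.sum_apply, Module.End.mul_apply, Module.End.natCast_apply, map_nsmul, hD,
      LinearMap.pow_mulRight, LinearMap.mulRight_apply]
  rw [hleibniz, sum_range_succ]
  simp

section OreExtension

variable {R S : Type*} [CommRing R] [Ring S]

noncomputable def ofCoeffs (f : R →+* S) (x : S) : (ℕ →₀ R) →+ S :=
  Finsupp.liftAddHom fun i => (AddMonoidHom.mulRight (x ^ i)).comp f.toAddMonoidHom

theorem ofCoeffs_apply (f : R →+* S) (x : S) (a : ℕ →₀ R) :
    ofCoeffs f x a = a.sum fun i r => f r * x ^ i := rfl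

noncomputable def commCoeffs (δ : R → R) (r : R) (a : ℕ →₀ R) : ℕ →₀ R :=
  a.sum fun i c => ∑ m ∈ range i, Finsupp.single m (c * i.choose m • δ^[i - m] r)

theorem ofCoeffs_single (f : R →+* S) (x : S) (i : ℕ) (c : R) :
    ofCoeffs f x (Finsupp.single i c) = f c * x ^ i :=
  Finsupp.liftAddHom_apply_single _ i c

theorem commCoeffs_apply_pred (δ : R → R) (r : R) {a : ℕ →₀ R} {n : ℕ} (hn : 1 ≤ n)
    (ha : ∀ i ∈ a.support, i ≤ n) : commCoeffs δ r a (n - 1) = a n * n • δ r := by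
  simp only [commCoeffs, Finsupp.sum_apply, Finsupp.finsetSum_apply, Finsupp.single_apply,
    sum_ite_eq', mem_range]
  rw [Finsupp.sum, sum_eq_single n]
  · rw [if_pos (by omega), Nat.choose_symm hn, Nat.choose_one_right, Nat.sub_sub_self hn,
      Function.iterate_one]
  · intro i hi hin
    rw [if_neg (by have := ha i hi; omega)]
  · intro hna
    rw [Finsupp.notMem_support_iff.mp hna, zero_mul, ite_self]

namespace IsOreExtension

variable {δ : R → R} {f : R →+* S} {x : S}

theorem pow_mul_sub_mul_pow (hS : IsOreExtension (RingHom.id R) δ f x) (n : ℕ) (r : R) :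
    x ^ n * f r - f r * x ^ n = ∑ m ∈ range n, f (n.choose m • δ^[n - m] r) * x ^ m := by
  have hy : ∀ k, x * f (δ^[k] r) - f (δ^[k] r) * x = f (δ^[k + 1] r) := fun k => by
    rw [hS.rel, Function.iterate_succ_apply']; simp
  simp only [map_nsmul, smul_mul_assoc]
  exact pow_mul_sub_mul_pow_eq_sum x (fun k => f (δ^[k] r)) hy n

theorem ofCoeffs_mul_sub_mul_ofCoeffs (hS : IsOreExtension (RingHom.id R) δ f x) (r : R)
    (a : ℕ →₀ R) :
    ofCoeffs f x a * f r - f r * ofCoeffs f x a = ofCoeffs f x (commCoeffs δ r a) := by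
  rw [commCoeffs, map_finsuppSum, ofCoeffs_apply, Finsupp.sum_mul, Finsupp.mul_sum,
    ← Finsupp.sum_sub]
  refine Finsupp.sum_congr fun i _ => ?_
  rw [map_sum, mul_assoc, ← mul_assoc (f r), ← map_mul, mul_comm r, map_mul, mul_assoc, ← mul_sub,
    hS.pow_mul_sub_mul_pow, mul_sum]
  refine sum_congr rfl fun m _ => ?_
  rw [ofCoeffs_single, ← mul_assoc, ← map_mul]

theorem support_subset_zero_of_commute [IsDomain R] [CharZero R]
    (hS : IsOreExtension (RingHom.id R) δ f x) {r : R} (hr : δ r ≠ 0) {a : ℕ →₀ R}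
    (h : Commute (ofCoeffs f x a) (f r)) : a.support ⊆ {0} := by
  intro m hm
  by_contra hm0
  set n := a.support.max' ⟨m, hm⟩
  have hle : ∀ i ∈ a.support, i ≤ n := fun i hi => a.support.le_max' i hi
  have hn : 1 ≤ n := (Nat.one_le_iff_ne_zero.mpr (by simpa using hm0)).trans (hle m hm)
  have hcomm : commCoeffs δ r a = 0 := by
    have hinj : Function.Injective (ofCoeffs f x) := hS.basis.injective
    rw [← map_eq_zero_iff _ hinj, ← hS.ofCoeffs_mul_sub_mul_ofCoeffs, h.eq, sub_self]
  have htop := congrArg (· (n - 1)) hcomm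
  simp only [commCoeffs_apply_pred δ r hn hle, Finsupp.coe_zero, Pi.zero_apply] at htop
  have han : a n ≠ 0 := Finsupp.mem_support_iff.mp (a.support.max'_mem _)
  have : n = 0 := by simpa [han, hr] using htop
  omega

end IsOreExtension

end OreExtension

theorem stmt_5_general {R S : Type*} [CommRing R] [IsDomain R] [CharZero R] [Ring S] (δ : R → R)
    (hne : δ ≠ 0)
    (f : R →+* S) (x : S) (hS : IsOreExtension (RingHom.id R) δ f x) :
    Subring.centralizer (Set.range f) = f.range := by
  obtain ⟨r, hr⟩ : ∃ r, δ r ≠ 0 := Function.ne_iff.mp hne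
  refine le_antisymm (fun s hs => ?_) ?_
  · obtain ⟨a, rfl⟩ := hS.basis.surjective s
    have hcomm : Commute (ofCoeffs f x a) (f r) :=
      (Subring.mem_centralizer_iff.mp hs (f r) ⟨r, rfl⟩).symm
    have ha : a = Finsupp.single 0 (a 0) :=
      Finsupp.support_subset_singleton.mp (hS.support_subset_zero_of_commute hr hcomm)
    refine ⟨a 0, ?_⟩
    change _ = ofCoeffs f x a
    conv_rhs => rw [ha]
    rw [ofCoeffs_single, pow_zero, mul_one]
  · rintro _ ⟨r, rfl⟩
    rw [Subring.mem_centralizer_iff]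
    rintro _ ⟨r', rfl⟩
    rw [← map_mul, ← map_mul, mul_comm]

/-- If `R` is a commutative domain of characteristic zero and `δ` is a non-zero
derivation, then `R` is a maximal commutative subring of `R[x;id,δ]`. -/
theorem stmt_5 {R S : Type*} [CommRing R] [IsDomain R] [CharZero R] [Ring S] (δ : R → R)
    (hδ : IsSigmaDerivation (RingHom.id R) δ) (hne : δ ≠ 0)
    (f : R →+* S) (x : S) (hS : IsOreExtension (RingHom.id R) δ f x) :
    Subring.centralizer (Set.range f) = f.range :=
  stmt_5_general δ hne f x hS
end

section
/- Let R be a commutative reduced unital ring, σ : R → R a ring endomorphism, and δ : R → R a σ-derivation. If the Ore extension R[x;σ,δ] is a simple ring, then σ is injective. -/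
section MonomialSum

variable {R T : Type*} [Ring R] [Ring T]

noncomputable def monomialSum (g : R →+* T) (y : T) : (ℕ →₀ R) →+ T :=
  Finsupp.liftAddHom fun i => (AddMonoidHom.mulRight (y ^ i)).comp g.toAddMonoidHom

theorem monomialSum_apply (g : R →+* T) (y : T) (b : ℕ →₀ R) :
    monomialSum g y b = b.sum fun i r => g r * y ^ i :=
  Finsupp.liftAddHom_apply _ _

theorem monomialSum_single (g : R →+* T) (y : T) (i : ℕ) (r : R) :
    monomialSum g y (Finsupp.single i r) = g r * y ^ i :=
  Finsupp.liftAddHom_apply_single _ _ _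

end MonomialSum

namespace IsOreExtension

variable {R S T : Type*} [Ring R] [Ring S] [Ring T] {σ : R →+* R} {δ : R → R} {f : R →+* S}
  {x : S}

theorem bijective_monomialSum (hS : IsOreExtension σ δ f x) :
    Function.Bijective (monomialSum f x) := by
  convert hS.basis using 1
  exact funext (monomialSum_apply f x)

theorem induction_on (hS : IsOreExtension σ δ f x) {P : S → Prop} (s : S) (zero : P 0)
    (add : ∀ s t, P s → P t → P (s + t)) (monomial : ∀ i r, P (f r * x ^ i)) : P s := by
  obtain ⟨b, rfl⟩ := hS.bijective_monomialSum.2 s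
  induction b using Finsupp.induction_linear with
  | zero => rwa [map_zero]
  | add b c hb hc => rw [map_add]; exact add _ _ hb hc
  | single i r => rw [monomialSum_single]; exact monomial i r

theorem map_ne_map_mul_x (hS : IsOreExtension σ δ f x) {a : R} (ha : a ≠ 0) (c : R) :
    f c ≠ f a * x := by
  intro h
  have hcoeff : Finsupp.single 0 c = Finsupp.single 1 a :=
    hS.bijective_monomialSum.1 (by simpa [monomialSum_single] using h)
  exact ha (by simpa using (DFunLike.congr_fun hcoeff 1).symm)

noncomputable def coeffEquiv (hS : IsOreExtension σ δ f x) : (ℕ →₀ R) ≃+ S :=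
  AddEquiv.ofBijective _ hS.bijective_monomialSum

noncomputable def liftAddHom (hS : IsOreExtension σ δ f x) (g : R →+* T) (y : T) : S →+ T :=
  (monomialSum g y).comp hS.coeffEquiv.symm.toAddMonoidHom

theorem liftAddHom_monomial (hS : IsOreExtension σ δ f x) (g : R →+* T) (y : T) (i : ℕ)
    (r : R) : hS.liftAddHom g y (f r * x ^ i) = g r * y ^ i := by
  have hmon : f r * x ^ i = hS.coeffEquiv (Finsupp.single i r) :=
    (monomialSum_single f x i r).symm
  simp only [liftAddHom, hmon, AddMonoidHom.coe_comp, Function.comp_apply,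
    AddEquiv.coe_toAddMonoidHom, AddEquiv.symm_apply_apply, monomialSum_single]

section Lift

variable (hS : IsOreExtension σ δ f x) {g : R →+* T} {y : T}

theorem liftAddHom_map_mul (r : R) (s : S) :
    hS.liftAddHom g y (f r * s) = g r * hS.liftAddHom g y s := by
  induction s using hS.induction_on with
  | zero => simp
  | add s t hs ht => simp only [mul_add, map_add, hs, ht]
  | monomial i r' => rw [← mul_assoc, ← map_mul, liftAddHom_monomial, liftAddHom_monomial,
      map_mul, mul_assoc]

theorem liftAddHom_x_mul (hy : ∀ r, y * g r = g (σ r) * y + g (δ r)) (s : S) :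
    hS.liftAddHom g y (x * s) = y * hS.liftAddHom g y s := by
  induction s using hS.induction_on with
  | zero => simp
  | add s t hs ht => simp only [mul_add, map_add, hs, ht]
  | monomial i r =>
    have hxmon : x * (f r * x ^ i) = f (σ r) * x ^ (i + 1) + f (δ r) * x ^ i := by
      rw [← mul_assoc, hS.rel, add_mul, mul_assoc, pow_succ']
    rw [hxmon, map_add, liftAddHom_monomial, liftAddHom_monomial, liftAddHom_monomial,
      ← mul_assoc, hy, pow_succ']
    noncomm_ring

theorem liftAddHom_x_pow_mul (hy : ∀ r, y * g r = g (σ r) * y + g (δ r)) (i : ℕ) (s : S) :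
    hS.liftAddHom g y (x ^ i * s) = y ^ i * hS.liftAddHom g y s := by
  induction i with
  | zero => simp
  | succ i ih => rw [pow_succ', mul_assoc, hS.liftAddHom_x_mul hy, ih, pow_succ', mul_assoc]

theorem liftAddHom_mul (hy : ∀ r, y * g r = g (σ r) * y + g (δ r)) (s t : S) :
    hS.liftAddHom g y (s * t) = hS.liftAddHom g y s * hS.liftAddHom g y t := by
  induction s using hS.induction_on with
  | zero => simp
  | add s s' hs hs' => simp only [add_mul, map_add, hs, hs']
  | monomial i r => rw [mul_assoc, liftAddHom_map_mul, liftAddHom_x_pow_mul _ hy,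
      liftAddHom_monomial, mul_assoc]

theorem liftAddHom_one : hS.liftAddHom g y 1 = 1 := by
  simpa using hS.liftAddHom_monomial g y 0 1

noncomputable def lift (hy : ∀ r, y * g r = g (σ r) * y + g (δ r)) : S →+* T :=
  { hS.liftAddHom g y with
    map_one' := hS.liftAddHom_one
    map_mul' := hS.liftAddHom_mul hy }

variable (hy : ∀ r, y * g r = g (σ r) * y + g (δ r))

theorem lift_map (r : R) : hS.lift hy (f r) = g r := by
  show hS.liftAddHom g y (f r) = g r
  simpa using hS.liftAddHom_monomial g y 0 r

theorem lift_x : hS.lift hy x = y := by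
  show hS.liftAddHom g y x = y
  simpa using hS.liftAddHom_monomial g y 1 1

end Lift

end IsOreExtension

theorem IsLocalization.Away.isNilpotent_of_subsingleton {R A : Type*} [CommRing R] [CommRing A]
    [Algebra R A] {a : R} [IsLocalization.Away a A] [Subsingleton A] : IsNilpotent a :=
  (Submonoid.mem_powers_iff 0 a).1 <|
    (IsLocalization.subsingleton_iff (M := Submonoid.powers a) (S := A)).1 ‹_›

namespace IsSigmaDerivation

variable {R : Type*} [CommRing R] {σ : R →+* R} {δ : R → R}

theorem apply_mul_eq_of_map_eq_zero (hδ : IsSigmaDerivation σ δ) {a : R} (hσa : σ a = 0)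
    (v : R) : δ a * v = σ v * δ a + δ v * a := by
  have h := hδ.2 a v
  rw [mul_comm a v, hδ.2 v a, hσa, zero_mul, zero_add] at h
  exact h.symm

theorem exists_ore_element_away (hδ : IsSigmaDerivation σ δ) {a : R} (hσa : σ a = 0) :
    ∃ q : Localization.Away a, algebraMap R _ a * q = algebraMap R _ (δ a) ∧
      ∀ v, q * algebraMap R _ v = algebraMap R _ (σ v) * q + algebraMap R _ (δ v) := by
  set C := algebraMap R (Localization.Away a)
  have hinv : C a * IsLocalization.Away.invSelf a = 1 := IsLocalization.Away.mul_invSelf a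
  refine ⟨C (δ a) * IsLocalization.Away.invSelf a, by linear_combination C (δ a) * hinv,
    fun v => ?_⟩
  have hkey := congrArg C (hδ.apply_mul_eq_of_map_eq_zero hσa v)
  simp only [map_mul, map_add] at hkey
  linear_combination IsLocalization.Away.invSelf a * hkey + C (δ v) * hinv

end IsSigmaDerivation

/-- If `R` is a commutative reduced ring and the Ore extension `R[x;σ,δ]` is simple,
then `σ` is injective. -/
theorem stmt_6 {R S : Type*} [CommRing R] [IsReduced R] [Ring S] (σ : R →+* R) (δ : R → R)
    (hδ : IsSigmaDerivation σ δ) (f : R →+* S) (x : S)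
    (hS : IsOreExtension σ δ f x) (hsimple : IsSimpleRing S) :
    Function.Injective σ := by
  refine (injective_iff_map_eq_zero σ).2 fun a hσa => ?_
  by_contra ha
  obtain ⟨q, hqa, hq⟩ := hδ.exists_ore_element_away hσa
  rcases IsSimpleRing.injective_ringHom_or_subsingleton_codomain (hS.lift hq) with hinj | htriv
  · refine hS.map_ne_map_mul_x ha (δ a) (hinj ?_)
    rw [map_mul, hS.lift_map, hS.lift_map, hS.lift_x, hqa]
  · exact ha (IsLocalization.Away.isNilpotent_of_subsingleton
      (A := Localization.Away a)).eq_zero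
end

section
/- Let R be a unital associative ring, σ : R → R a ring endomorphism, and δ : R → R a σ-derivation. If the Ore extension R[x;σ,δ] is a simple ring, then R is σ-δ-simple. -/
/-!
Extend a `σ`-`δ`-invariant ideal `J` of `R` to the set `J[x;σ,δ]` of elements of `S` all of whose
coefficients lie in `J`. The commutation rule `x r = σ(r) x + δ(r)` together with the invariance
of `J` makes it a two-sided ideal of `S`, and uniqueness of coefficients gives `f⁻¹(J[x;σ,δ]) = J`.
Simplicity of `S` forces `J[x;σ,δ]` to be `0` or `S`, hence `J` to be `0` or `R`.
-/

namespace TwoSidedIdeal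

variable {R S : Type*} [Ring R] [Ring S]

lemma comap_top (f : R →+* S) : (⊤ : TwoSidedIdeal S).comap f = ⊤ :=
  eq_top_iff.mpr fun _ _ => mem_comap f |>.mpr (mem_top S)

lemma comap_bot_of_injective {f : R →+* S} (hf : Function.Injective f) :
    (⊥ : TwoSidedIdeal S).comap f = ⊥ :=
  eq_bot_iff.mpr fun r hr => by
    rw [mem_comap, mem_bot, ← map_zero f] at hr
    exact (mem_bot R).mpr (hf hr)

end TwoSidedIdeal

namespace Finsupp

variable {ι M A : Type*} [AddGroup M] [SetLike A M] [AddSubgroupClass A M]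

def coeffsIn (H : A) : AddSubgroup (ι →₀ M) where
  carrier := {a | ∀ i, a i ∈ H}
  zero_mem' _ := zero_mem H
  add_mem' ha hb i := add_mem (ha i) (hb i)
  neg_mem' ha i := neg_mem (ha i)

lemma single_mem_coeffsIn {H : A} {m : M} (hm : m ∈ H) (i : ι) :
    single i m ∈ coeffsIn H := fun j => by
  classical
  rw [single_apply]
  split_ifs
  exacts [hm, zero_mem H]

end Finsupp

open Finsupp

section OreSum

variable {R S : Type*} [Ring R] [Ring S] (f : R →+* S) (x : S)

noncomputable def oreSum : (ℕ →₀ R) →+ S :=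
  liftAddHom fun i => (AddMonoidHom.mulRight (x ^ i)).comp f.toAddMonoidHom

lemma oreSum_apply (a : ℕ →₀ R) : oreSum f x a = a.sum fun i r => f r * x ^ i :=
  liftAddHom_apply _ a

lemma oreSum_single (i : ℕ) (r : R) : oreSum f x (single i r) = f r * x ^ i := by
  simp [oreSum_apply]

lemma oreSum_smul (r : R) (a : ℕ →₀ R) : oreSum f x (r • a) = f r * oreSum f x a := by
  rw [oreSum_apply, oreSum_apply, sum_smul_index fun _ => by simp, Finsupp.mul_sum]
  simp only [map_mul, mul_assoc]

noncomputable def oreSubgroup (J : TwoSidedIdeal R) : AddSubgroup S :=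
  (coeffsIn J).map (oreSum f x)

variable {f x} {J : TwoSidedIdeal R}

lemma single_mem_oreSubgroup {r : R} (hr : r ∈ J) (i : ℕ) :
    f r * x ^ i ∈ oreSubgroup f x J :=
  ⟨single i r, single_mem_coeffsIn hr i, oreSum_single f x i r⟩

lemma coeff_mul_mem_oreSubgroup (r : R) {s : S} (hs : s ∈ oreSubgroup f x J) :
    f r * s ∈ oreSubgroup f x J := by
  obtain ⟨a, ha, rfl⟩ := hs
  exact ⟨r • a, fun i => J.mul_mem_left r _ (ha i), oreSum_smul f x r a⟩

end OreSum

namespace IsOreExtension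

variable {R S : Type*} [Ring R] [Ring S] {σ : R →+* R} {δ : R → R} {f : R →+* S} {x : S}
  (hS : IsOreExtension σ δ f x)
include hS

lemma bijective_oreSum : Function.Bijective (oreSum f x) := by
  convert hS.basis using 1
  exact funext (oreSum_apply f x)

lemma injective : Function.Injective f := fun r s h => by
  simpa using DFunLike.congr_fun
    (hS.bijective_oreSum.injective (a₁ := single 0 r) (a₂ := single 0 s)
      (by simpa [oreSum_single] using h)) 0

variable {J : TwoSidedIdeal R}

lemma apply_mem_oreSubgroup_iff {r : R} : f r ∈ oreSubgroup f x J ↔ r ∈ J := by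
  refine ⟨fun ⟨a, ha, h⟩ => ?_, fun hr => by simpa using single_mem_oreSubgroup hr 0⟩
  rw [← mul_one (f r), ← pow_zero x, ← oreSum_single] at h
  obtain rfl := hS.bijective_oreSum.injective h
  simpa using ha 0

lemma coeff_mul_mem_oreSubgroup_of_mem {r : R} (hr : r ∈ J) (s : S) :
    f r * s ∈ oreSubgroup f x J := by
  obtain ⟨c, rfl⟩ := hS.bijective_oreSum.surjective s
  exact ⟨r • c, fun i => J.mul_mem_right r _ hr, oreSum_smul f x r c⟩

lemma x_pow_mul_mem_oreSubgroup (hσJ : ∀ a ∈ J, σ a ∈ J) (hδJ : ∀ a ∈ J, δ a ∈ J) (n : ℕ)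
    {s : S} (hs : s ∈ oreSubgroup f x J) : x ^ n * s ∈ oreSubgroup f x J := by
  induction n with
  | zero => simpa using hs
  | succ n ih =>
    obtain ⟨a, ha, hsum⟩ := ih
    rw [pow_succ', mul_assoc, ← hsum, oreSum_apply, sum, Finset.mul_sum]
    refine AddSubgroup.sum_mem _ fun i _ => ?_
    have hcomm : x * (f (a i) * x ^ i) = f (σ (a i)) * x ^ (i + 1) + f (δ (a i)) * x ^ i := by
      rw [← mul_assoc, hS.rel, add_mul, pow_succ', mul_assoc]
    rw [hcomm]
    exact add_mem (single_mem_oreSubgroup (hσJ _ (ha i)) _)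
      (single_mem_oreSubgroup (hδJ _ (ha i)) _)

def extendIdeal (J : TwoSidedIdeal R) (hσJ : ∀ a ∈ J, σ a ∈ J) (hδJ : ∀ a ∈ J, δ a ∈ J) :
    TwoSidedIdeal S :=
  .mk' (oreSubgroup f x J) (zero_mem _) add_mem neg_mem
    (fun {s t} ht => by
      obtain ⟨b, rfl⟩ := hS.bijective_oreSum.surjective s
      rw [oreSum_apply, sum, Finset.sum_mul]
      exact AddSubgroup.sum_mem _ fun i _ => mul_assoc (f (b i)) _ t ▸
        coeff_mul_mem_oreSubgroup _ (hS.x_pow_mul_mem_oreSubgroup hσJ hδJ i ht))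
    (fun {t s} ht => by
      obtain ⟨a, ha, rfl⟩ := ht
      rw [oreSum_apply, sum, Finset.sum_mul]
      exact AddSubgroup.sum_mem _ fun i _ => mul_assoc (f (a i)) _ s ▸
        hS.coeff_mul_mem_oreSubgroup_of_mem (ha i) _)

lemma comap_extendIdeal (hσJ : ∀ a ∈ J, σ a ∈ J) (hδJ : ∀ a ∈ J, δ a ∈ J) :
    (hS.extendIdeal J hσJ hδJ).comap f = J :=
  TwoSidedIdeal.ext fun _ =>
    (TwoSidedIdeal.mem_comap f).trans <| (TwoSidedIdeal.mem_mk' _ _ _ _ _ _ _).trans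
      hS.apply_mem_oreSubgroup_iff

end IsOreExtension

theorem stmt_8_general {R S : Type*} [Ring R] [Ring S] (σ : R →+* R) (δ : R → R)
    (f : R →+* S) (x : S)
    (hS : IsOreExtension σ δ f x) (hsimple : IsSimpleRing S) :
    IsSigmaDeltaSimple σ δ := by
  intro J hσJ hδJ
  rw [← hS.comap_extendIdeal hσJ hδJ]
  rcases hsimple.simple.eq_bot_or_eq_top (hS.extendIdeal J hσJ hδJ) with h | h
  · exact .inl (h ▸ TwoSidedIdeal.comap_bot_of_injective hS.injective)
  · exact .inr (h ▸ TwoSidedIdeal.comap_top f)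

/-- If the Ore extension `R[x;σ,δ]` is simple, then `R` is `σ`-`δ`-simple. -/
theorem stmt_8 {R S : Type*} [Ring R] [Ring S] (σ : R →+* R) (δ : R → R)
    (hδ : IsSigmaDerivation σ δ) (f : R →+* S) (x : S)
    (hS : IsOreExtension σ δ f x) (hsimple : IsSimpleRing S) :
    IsSigmaDeltaSimple σ δ :=
  stmt_8_general σ δ f x hS hsimple
end

section
/- Let R be a domain, σ : R → R a ring endomorphism, and δ : R → R a non-zero σ-derivation. Then an element r ∈ R belongs to the center Z(R[x;σ,δ]) of the Ore extension R[x;σ,δ] if and only if δ(r) = 0 and r ∈ Z(R). -/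
/-- If `R` is a domain and `δ` is non-zero, then `r ∈ R` belongs to `Z(R[x;σ,δ])` if
and only if `δ(r) = 0` and `r ∈ Z(R)`. -/
theorem stmt_9 {R S : Type*} [Ring R] [IsDomain R] [Ring S] (σ : R →+* R) (δ : R → R)
    (hδ : IsSigmaDerivation σ δ) (hne : δ ≠ 0) (f : R →+* S) (x : S)
    (hS : IsOreExtension σ δ f x) (r : R) :
    f r ∈ Subring.center S ↔ δ r = 0 ∧ r ∈ Subring.center R := by
  have hinj : Function.Injective f := by
    intro a b hab
    have h := hS.basis.injective (a₁ := Finsupp.single 0 a) (a₂ := Finsupp.single 0 b) ?_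
    · simpa using congrArg (fun g : ℕ →₀ R => g 0) h
    · show (Finsupp.single 0 a).sum (fun i r => f r * x ^ i)
        = (Finsupp.single 0 b).sum (fun i r => f r * x ^ i)
      rw [Finsupp.sum_single_index (by simp), Finsupp.sum_single_index (by simp)]
      simpa using hab
  constructor
  · intro hr
    have hx : x * f r = f r * x := (Subring.mem_center_iff.mp hr) x
    have hrep : (Finsupp.single 1 (σ r) + Finsupp.single 0 (δ r)).sum
        (fun i r => f r * x ^ i) = (Finsupp.single 1 r).sum (fun i r => f r * x ^ i) := by
      rw [Finsupp.sum_add_index' (by intro i; simp)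
        (by intro i b₁ b₂; rw [map_add, add_mul]),
        Finsupp.sum_single_index (by simp), Finsupp.sum_single_index (by simp),
        Finsupp.sum_single_index (by simp)]
      simp only [pow_one, pow_zero, mul_one]; rw [← hx, hS.rel r]
    have heq := hS.basis.injective hrep
    have h0 := congrArg (fun g : ℕ →₀ R => g 0) heq
    have h1 := congrArg (fun g : ℕ →₀ R => g 1) heq
    simp at h0 h1
    refine ⟨h0, Subring.mem_center_iff.mpr fun s => ?_⟩
    apply hinj
    rw [map_mul, map_mul]
    exact (Subring.mem_center_iff.mp hr) (f s)
  · rintro ⟨hd, hc⟩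
    have hcr : ∀ s : R, s * r = r * s := Subring.mem_center_iff.mp hc
    obtain ⟨a, ha⟩ : ∃ a, δ a ≠ 0 := by
      by_contra h
      push_neg at h
      exact hne (funext h)
    have hσ : σ r = r := by
      have e1 : δ (r * a) = σ r * δ a := by rw [hδ.2, hd, zero_mul, add_zero]
      have e2 : δ (a * r) = δ a * r := by rw [hδ.2, hd, mul_zero, zero_add]
      have e3 : σ r * δ a = r * δ a := by
        rw [← e1, ← hcr a, e2, hcr (δ a)]
      have h4 := sub_eq_zero.mpr e3
      rw [← sub_mul] at h4
      rcases mul_eq_zero.mp h4 with h | h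
      · exact sub_eq_zero.mp h
      · exact absurd h ha
    have hxr : Commute (f r) x := by
      show f r * x = x * f r
      rw [hS.rel r, hσ, hd, map_zero, add_zero]
    refine Subring.mem_center_iff.mpr fun s => ?_
    obtain ⟨a, rfl⟩ := hS.basis.surjective s
    show (a.sum fun i r => f r * x ^ i) * f r = f r * (a.sum fun i r => f r * x ^ i)
    rw [Finsupp.sum_mul, Finsupp.mul_sum]
    refine Finset.sum_congr rfl fun i _ => ?_
    have h1 : Commute (f r) (f (a i)) := by
      show f r * f (a i) = f (a i) * f r
      rw [← map_mul, ← map_mul, hcr (a i)]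
    exact (h1.mul_right (hxr.pow_right i)).eq.symm
end

section
/- Let R be a unital associative ring and δ : R → R a derivation. For every non-zero two-sided ideal I of the differential polynomial ring R[x;id_R,δ], one has I ∩ Z(R)' ≠ {0}, where Z(R)' denotes the centralizer of the center Z(R) of R in R[x;id_R,δ]. -/
/-!
Filter `R[x;id,δ]` by the additive subgroups `degreeLT f x n` spanned by the monomials `r xⁱ`
with `i < n`. Since `x r = r x + δ(r)`, commuting a central `z ∈ R` past an element of degree
`< n + 1` leaves an error term of degree `< n`. So if a non-zero `s ∈ I` fails to commute with
some central `z`, then `s z - z s` is a non-zero element of `I` of strictly smaller degree, and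
induction on the degree produces a non-zero element of `I` centralizing `Z(R)`.
-/

namespace OreExtension

variable {R S : Type*} [Ring R] [Ring S] (f : R →+* S) (x : S)

def degreeLT (n : ℕ) : AddSubgroup S :=
  AddSubgroup.closure {s | ∃ r i, i < n ∧ s = f r * x ^ i}

variable {f x}

theorem monomial_mem_degreeLT {r : R} {i n : ℕ} (h : i < n) : f r * x ^ i ∈ degreeLT f x n :=
  AddSubgroup.subset_closure ⟨r, i, h, rfl⟩

theorem degreeLT_mono {m n : ℕ} (h : m ≤ n) : degreeLT f x m ≤ degreeLT f x n :=
  AddSubgroup.closure_mono fun _ ⟨r, i, hi, hs⟩ => ⟨r, i, hi.trans_le h, hs⟩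

@[simp]
theorem degreeLT_zero : degreeLT f x 0 = ⊥ := by
  simp [degreeLT]

theorem map_mem_degreeLT {m n : ℕ} (φ : S →+ S)
    (hφ : ∀ r i, i < m → φ (f r * x ^ i) ∈ degreeLT f x n) {s : S} (hs : s ∈ degreeLT f x m) :
    φ s ∈ degreeLT f x n :=
  (AddSubgroup.closure_le (K := (degreeLT f x n).comap φ)).2
    (by rintro _ ⟨r, i, hi, rfl⟩; exact hφ r i hi) hs

theorem exists_mem_degreeLT
    (hsurj : Function.Surjective fun a : ℕ →₀ R => a.sum fun i r => f r * x ^ i) (s : S) :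
    ∃ n, s ∈ degreeLT f x n := by
  obtain ⟨a, rfl⟩ := hsurj s
  exact ⟨a.support.sup id + 1, AddSubgroup.sum_mem _ fun i hi =>
    monomial_mem_degreeLT (Nat.lt_succ_of_le (Finset.le_sup (f := id) hi))⟩

theorem map_mul_mem_degreeLT (r : R) {n : ℕ} {s : S} (hs : s ∈ degreeLT f x n) :
    f r * s ∈ degreeLT f x n :=
  map_mem_degreeLT (AddMonoidHom.mulLeft (f r))
    (fun c i hi => by simpa [← mul_assoc, ← map_mul] using monomial_mem_degreeLT hi) hs

variable {δ : R → R} (hrel : ∀ r : R, x * f r = f r * x + f (δ r))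
include hrel

theorem x_mul_mem_degreeLT_succ {n : ℕ} {s : S} (hs : s ∈ degreeLT f x n) :
    x * s ∈ degreeLT f x (n + 1) := by
  refine map_mem_degreeLT (AddMonoidHom.mulLeft x) (fun c i hi => ?_) hs
  rw [AddMonoidHom.coe_mulLeft, ← mul_assoc, hrel, add_mul, mul_assoc, ← pow_succ']
  exact add_mem (monomial_mem_degreeLT (by omega)) (monomial_mem_degreeLT (by omega))

theorem pow_mul_sub_mul_pow_mem_degreeLT (z : R) (i : ℕ) :
    x ^ i * f z - f z * x ^ i ∈ degreeLT f x i := by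
  induction i with
  | zero => simp
  | succ i ih =>
    have hsplit : x ^ (i + 1) * f z - f z * x ^ (i + 1)
        = x * (x ^ i * f z - f z * x ^ i) + f (δ z) * x ^ i := by
      rw [pow_succ', show f (δ z) = x * f z - f z * x by rw [hrel]; abel]
      noncomm_ring
    rw [hsplit]
    exact add_mem (x_mul_mem_degreeLT_succ hrel ih) (monomial_mem_degreeLT (by omega))

theorem mul_map_sub_map_mul_mem_degreeLT {n : ℕ} {s : S} (hs : s ∈ degreeLT f x (n + 1)) {z : R}
    (hz : z ∈ Subring.center R) : s * f z - f z * s ∈ degreeLT f x n := by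
  refine map_mem_degreeLT (AddMonoidHom.mulRight (f z) - AddMonoidHom.mulLeft (f z))
    (fun c i hi => ?_) hs
  have hcomm : f c * x ^ i * f z - f z * (f c * x ^ i)
      = f c * (x ^ i * f z - f z * x ^ i) := by
    rw [← mul_assoc (f z), ← map_mul, ← Subring.mem_center_iff.mp hz c, map_mul]
    noncomm_ring
  simpa [hcomm] using degreeLT_mono (by omega)
    (map_mul_mem_degreeLT c (pow_mul_sub_mul_pow_mem_degreeLT hrel z i))

theorem exists_ne_zero_mem_centralizer_of_mem_degreeLT (I : TwoSidedIdeal S) (n : ℕ) :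
    ∀ s ∈ I, s ≠ 0 → s ∈ degreeLT f x n →
      ∃ t ∈ I, t ≠ 0 ∧ t ∈ Subring.centralizer (f '' (Subring.center R : Set R)) := by
  induction n with
  | zero =>
    intro s _ hs0 hs
    simp_all
  | succ n ih =>
    intro s hsI hs0 hsn
    by_cases hcent : s ∈ Subring.centralizer (f '' (Subring.center R : Set R))
    · exact ⟨s, hsI, hs0, hcent⟩
    obtain ⟨_, ⟨z, hz, rfl⟩, hne⟩ : ∃ y ∈ f '' (Subring.center R : Set R), y * s ≠ s * y := by
      simpa [Subring.mem_centralizer_iff] using hcent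
    exact ih _ (I.sub_mem (I.mul_mem_right _ _ hsI) (I.mul_mem_left _ _ hsI))
      (sub_ne_zero.2 hne.symm) (mul_map_sub_map_mul_mem_degreeLT hrel hsn hz)

end OreExtension

theorem stmt_11_general {R S : Type*} [Ring R] [Ring S] (δ : R → R)
    (f : R →+* S) (x : S)
    (hS : IsOreExtension (RingHom.id R) δ f x)
    (I : TwoSidedIdeal S) (hI : I ≠ ⊥) :
    ∃ s : S, s ∈ I ∧ s ≠ 0 ∧
      s ∈ Subring.centralizer (f '' (Subring.center R : Set R)) := by
  have hrel : ∀ r : R, x * f r = f r * x + f (δ r) := by simpa using hS.rel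
  obtain ⟨s, hsI, hs0⟩ := SetLike.exists_of_lt (bot_lt_iff_ne_bot.2 hI)
  obtain ⟨n, hsn⟩ := OreExtension.exists_mem_degreeLT hS.basis.surjective s
  exact OreExtension.exists_ne_zero_mem_centralizer_of_mem_degreeLT hrel I n s hsI
    (mt (TwoSidedIdeal.mem_bot S).2 hs0) hsn

/-- Every non-zero two-sided ideal of `R[x;id,δ]` intersects the centralizer of `Z(R)`
in `R[x;id,δ]` non-trivially. -/
theorem stmt_11 {R S : Type*} [Ring R] [Ring S] (δ : R → R)
    (hδ : IsSigmaDerivation (RingHom.id R) δ) (f : R →+* S) (x : S)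
    (hS : IsOreExtension (RingHom.id R) δ f x)
    (I : TwoSidedIdeal S) (hI : I ≠ ⊥) :
    ∃ s : S, s ∈ I ∧ s ≠ 0 ∧
      s ∈ Subring.centralizer (f '' (Subring.center R : Set R)) :=
  stmt_11_general δ f x hS I hI
end

section
/- Let R be a commutative unital ring and δ : R → R a derivation. If R is a maximal commutative subring of the differential polynomial ring R[x;id_R,δ], then I ∩ R ≠ {0} holds for every non-zero two-sided ideal I of R[x;id_R,δ]. -/
/-! Take a non-zero `s ∈ I` of least degree in `x`. For `r : R` the commutator
`s * f r - f r * s` lies in `I` and, since `R` is commutative and `x * f r - f r * x = f (δ r)`,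
has smaller degree, so it vanishes. Hence `s` centralizes `f(R)`, and maximality puts it in
`f(R)`. -/

section DegreeFiltration

variable {R S : Type*} [Ring R] [Ring S] (f : R →+* S) (x : S)

def degreeLT (n : ℕ) : AddSubgroup S :=
  AddSubgroup.closure {s | ∃ r : R, ∃ i < n, s = f r * x ^ i}

variable {f x}

lemma degreeLT_zero : degreeLT f x 0 = ⊥ := by
  simp [degreeLT]

lemma monomial_mem_degreeLT (r : R) {i n : ℕ} (hi : i < n) : f r * x ^ i ∈ degreeLT f x n :=
  AddSubgroup.subset_closure ⟨r, i, hi, rfl⟩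

lemma degreeLT_mono {m n : ℕ} (hmn : m ≤ n) : degreeLT f x m ≤ degreeLT f x n :=
  AddSubgroup.closure_mono fun _ ⟨r, i, hi, hs⟩ => ⟨r, i, hi.trans_le hmn, hs⟩

lemma degreeLT_le_comap {g : S →+ S} {m n : ℕ}
    (h : ∀ (r : R) (i : ℕ), i < m → g (f r * x ^ i) ∈ degreeLT f x n) :
    degreeLT f x m ≤ (degreeLT f x n).comap g :=
  AddSubgroup.closure_le _ |>.2 fun _ ⟨r, i, hi, hs⟩ => hs ▸ h r i hi

lemma mul_mem_degreeLT (c : R) {n : ℕ} {s : S} (hs : s ∈ degreeLT f x n) :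
    f c * s ∈ degreeLT f x n := by
  refine degreeLT_le_comap (g := AddMonoidHom.mulLeft (f c)) (fun r i hi => ?_) hs
  simpa [← mul_assoc, ← map_mul] using monomial_mem_degreeLT (c * r) hi

lemma mem_degreeLT_of_basis (hbasis : Function.Surjective fun a : ℕ →₀ R =>
    a.sum fun i r => f r * x ^ i) (s : S) : ∃ n, s ∈ degreeLT f x n := by
  obtain ⟨a, rfl⟩ := hbasis s
  exact ⟨a.support.sup id + 1, AddSubgroup.sum_mem _ fun i hi =>
    monomial_mem_degreeLT _ (Nat.lt_succ_of_le (Finset.le_sup (f := id) hi))⟩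

variable {δ : R → R} (hrel : ∀ r : R, x * f r = f r * x + f (δ r))
include hrel

lemma x_mul_mem_degreeLT {n : ℕ} {s : S} (hs : s ∈ degreeLT f x n) :
    x * s ∈ degreeLT f x (n + 1) := by
  refine degreeLT_le_comap (g := AddMonoidHom.mulLeft x) (fun r i hi => ?_) hs
  have hx : x * (f r * x ^ i) = f r * x ^ (i + 1) + f (δ r) * x ^ i := by
    rw [← mul_assoc, hrel, add_mul, mul_assoc, ← pow_succ']
  rw [AddMonoidHom.coe_mulLeft, hx]
  exact add_mem (monomial_mem_degreeLT r (by omega)) (monomial_mem_degreeLT (δ r) (by omega))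

lemma pow_mul_sub_mul_pow_mem_degreeLT (r : R) (n : ℕ) :
    x ^ n * f r - f r * x ^ n ∈ degreeLT f x n := by
  induction n with
  | zero => simp
  | succ n ih =>
    have h : x ^ (n + 1) * f r - f r * x ^ (n + 1) =
        x * (x ^ n * f r - f r * x ^ n) + f (δ r) * x ^ n := by
      rw [pow_succ', mul_assoc, mul_sub, ← mul_assoc x (f r), hrel]
      noncomm_ring
    rw [h]
    exact add_mem (x_mul_mem_degreeLT hrel ih) (monomial_mem_degreeLT (δ r) n.lt_succ_self)

end DegreeFiltration

section Commutative

variable {R S : Type*} [CommRing R] [Ring S] {f : R →+* S} {x : S} {δ : R → R}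
  (hrel : ∀ r : R, x * f r = f r * x + f (δ r))
include hrel

lemma mul_sub_mul_mem_degreeLT (r : R) {n : ℕ} {s : S} (hs : s ∈ degreeLT f x (n + 1)) :
    s * f r - f r * s ∈ degreeLT f x n := by
  refine degreeLT_le_comap (g := AddMonoidHom.mulRight (f r) - AddMonoidHom.mulLeft (f r))
    (fun a i hi => ?_) hs
  have h : f a * x ^ i * f r - f r * (f a * x ^ i) = f a * (x ^ i * f r - f r * x ^ i) := by
    rw [← mul_assoc (f r), ← map_mul, mul_comm r, map_mul]
    noncomm_ring
  simp only [AddMonoidHom.sub_apply, AddMonoidHom.coe_mulRight, AddMonoidHom.coe_mulLeft, h]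
  exact mul_mem_degreeLT a
    (degreeLT_mono (Nat.lt_succ_iff.1 hi) (pow_mul_sub_mul_pow_mem_degreeLT hrel r i))

lemma exists_ne_zero_mem_range_of_mem_degreeLT
    (hmax : Subring.centralizer (Set.range f) = f.range) (I : TwoSidedIdeal S) (n : ℕ) {s : S} (hs : s ∈ degreeLT f x n) (hsI : s ∈ I) (hs0 : s ≠ 0) :
    ∃ t : S, t ∈ I ∧ t ≠ 0 ∧ t ∈ Set.range f := by
  induction n generalizing s with
  | zero => exact absurd (by simpa [degreeLT_zero] using hs) hs0
  | succ n ih =>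
    by_cases hcomm : ∀ r : R, f r * s = s * f r
    · have hcen : s ∈ Subring.centralizer (Set.range f) := by
        rw [Subring.mem_centralizer_iff]
        rintro _ ⟨r, rfl⟩
        exact hcomm r
      rw [hmax] at hcen
      exact ⟨s, hsI, hs0, hcen⟩
    · push Not at hcomm
      obtain ⟨r, hr⟩ := hcomm
      exact ih (mul_sub_mul_mem_degreeLT hrel r hs)
        (I.sub_mem (I.mul_mem_right _ _ hsI) (I.mul_mem_left _ _ hsI)) (sub_ne_zero.2 hr.symm)

end Commutative

theorem stmt_12_general {R S : Type*} [CommRing R] [Ring S] (δ : R → R)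
    (f : R →+* S) (x : S)
    (hS : IsOreExtension (RingHom.id R) δ f x)
    (hmax : Subring.centralizer (Set.range f) = f.range)
    (I : TwoSidedIdeal S) (hI : I ≠ ⊥) :
    ∃ s : S, s ∈ I ∧ s ≠ 0 ∧ s ∈ Set.range f := by
  have hrel (r : R) : x * f r = f r * x + f (δ r) := hS.rel r
  obtain ⟨s, hsI, hs0⟩ : ∃ s ∈ I, s ≠ 0 := by
    by_contra! h
    exact hI (le_bot_iff.1 fun s hs => (TwoSidedIdeal.mem_bot S).2 (h s hs))
  obtain ⟨n, hn⟩ := mem_degreeLT_of_basis hS.basis.2 s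
  exact exists_ne_zero_mem_range_of_mem_degreeLT hrel hmax I n hn hsI hs0

/-- If `R` is commutative and a maximal commutative subring of `R[x;id,δ]`, then every
non-zero two-sided ideal of `R[x;id,δ]` intersects `R` non-trivially. -/
theorem stmt_12 {R S : Type*} [CommRing R] [Ring S] (δ : R → R)
    (hδ : IsSigmaDerivation (RingHom.id R) δ) (f : R →+* S) (x : S)
    (hS : IsOreExtension (RingHom.id R) δ f x)
    (hmax : Subring.centralizer (Set.range f) = f.range)
    (I : TwoSidedIdeal S) (hI : I ≠ ⊥) :
    ∃ s : S, s ∈ I ∧ s ≠ 0 ∧ s ∈ Set.range f :=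
  stmt_12_general δ f x hS hmax I hI
end

section
/- Let R be a unital associative ring and δ : R → R a derivation such that R is δ-simple, and let S = R[x;id_R,δ] be the differential polynomial ring. Then for every non-zero element b ∈ S there exists an element b' ∈ S such that: (i) b' belongs to the two-sided ideal SbS generated by b; (ii) deg(b') = deg(b); and (iii) the highest degree coefficient of b' equals 1. -/
/-- If `R` is `δ`-simple then for every non-zero `b` in `S = R[x;id,δ]` (written as
`b = Σ_{i=0}^n f(aᵢ) xⁱ` with `aₙ ≠ 0`, so that `deg b = n`) there is `b' ∈ SbS` with
`deg b' = deg b` and highest degree coefficient `1`. -/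
theorem stmt_13 {R S : Type*} [Ring R] [Ring S] (δ : R → R)
    (hδ : IsSigmaDerivation (RingHom.id R) δ) (hdsimple : IsDeltaSimple δ)
    (f : R →+* S) (x : S) (hS : IsOreExtension (RingHom.id R) δ f x)
    (b : S) (hb : b ≠ 0) (n : ℕ) (a : ℕ → R)
    (hrep : b = ∑ i ∈ Finset.range (n + 1), f (a i) * x ^ i) (hlead : a n ≠ 0) :
    ∃ c : ℕ → R, c n = 1 ∧
      (∑ i ∈ Finset.range (n + 1), f (c i) * x ^ i) ∈ TwoSidedIdeal.span {b} := by
  have rel : ∀ r : R, x * f r = f r * x + f (δ r) := fun r => by simpa using hS.rel r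
  -- expansion of x^i * f r
  have powrel : ∀ (i : ℕ) (r : R), ∃ d : ℕ → R, d i = r ∧
      x ^ i * f r = ∑ j ∈ Finset.range (i + 1), f (d j) * x ^ j := by
    intro i
    induction i with
    | zero => intro r; exact ⟨fun _ => r, rfl, by simp⟩
    | succ i ih =>
      intro r
      obtain ⟨d, hdi, hd⟩ := ih r
      refine ⟨fun j => (if j = 0 then 0 else d (j - 1)) + (if j ≤ i then δ (d j) else 0),
        by simp [hdi, Nat.succ_ne_zero], ?_⟩
      have h1 : x ^ (i + 1) * f r = x * (x ^ i * f r) := by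
        rw [pow_succ']; rw [mul_assoc]
      rw [h1, hd, Finset.mul_sum]
      have h2 : ∀ j, x * (f (d j) * x ^ j) = f (d j) * x ^ (j + 1) + f (δ (d j)) * x ^ j := by
        intro j
        rw [← mul_assoc, rel, add_mul, mul_assoc, ← pow_succ']
      simp_rw [h2]
      rw [Finset.sum_add_distrib]
      have h3 : ∀ j : ℕ, f ((if j = 0 then (0:R) else d (j - 1)) +
            (if j ≤ i then δ (d j) else 0)) * x ^ j
          = f (if j = 0 then (0:R) else d (j - 1)) * x ^ j
            + f (if j ≤ i then δ (d j) else 0) * x ^ j := by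
        intro j; rw [map_add, add_mul]
      simp_rw [h3]
      rw [Finset.sum_add_distrib]
      congr 1
      · rw [Finset.sum_range_succ' (fun j => f (if j = 0 then (0:R) else d (j - 1)) * x ^ j)]
        simp
      · rw [Finset.sum_range_succ (fun j => f (if j ≤ i then δ (d j) else 0) * x ^ j)]
        rw [if_neg (by omega : ¬ i + 1 ≤ i), map_zero, zero_mul, add_zero]
        apply Finset.sum_congr rfl
        intro j hj
        rw [if_pos (by simpa [Nat.lt_succ_iff] using Finset.mem_range.mp hj)]
  -- right multiplication of a polynomial by f r
  have mulr : ∀ (m : ℕ) (c : ℕ → R) (r : R), ∃ C : ℕ → R, C m = c m * r ∧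
      (∑ i ∈ Finset.range (m + 1), f (c i) * x ^ i) * f r
        = ∑ i ∈ Finset.range (m + 1), f (C i) * x ^ i := by
    intro m
    induction m with
    | zero =>
      intro c r
      exact ⟨fun _ => c 0 * r, rfl, by simp [← map_mul]⟩
    | succ m ih =>
      intro c r
      obtain ⟨C', hC'm, hC'⟩ := ih c r
      obtain ⟨d, hdm, hd⟩ := powrel (m + 1) r
      refine ⟨fun j => (if j ≤ m then C' j else 0) + c (m + 1) * d j, ?_, ?_⟩
      · simp [if_neg (by omega : ¬ m + 1 ≤ m), hdm]
      · rw [Finset.sum_range_succ (fun i => f (c i) * x ^ i), add_mul, hC',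
          mul_assoc, hd, Finset.mul_sum]
        have h4 : ∀ j, f (c (m + 1)) * (f (d j) * x ^ j) = f (c (m + 1) * d j) * x ^ j := by
          intro j; rw [← mul_assoc, ← map_mul]
        simp_rw [h4]
        have h5 : ∀ j : ℕ, f ((if j ≤ m then C' j else 0) + c (m + 1) * d j) * x ^ j
            = f (if j ≤ m then C' j else 0) * x ^ j + f (c (m + 1) * d j) * x ^ j := by
          intro j; rw [map_add, add_mul]
        simp_rw [h5]
        rw [Finset.sum_add_distrib]
        congr 1
        rw [Finset.sum_range_succ (fun j => f (if j ≤ m then C' j else (0:R)) * x ^ j)]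
        simp only [if_neg (by omega : ¬ m + 1 ≤ m), map_zero, zero_mul, add_zero]
        apply Finset.sum_congr rfl
        intro j hj
        rw [if_pos (by simpa [Nat.lt_succ_iff] using Finset.mem_range.mp hj)]
  set I := TwoSidedIdeal.span {b} with hI
  -- the carrier set
  set T : Set R := {r : R | ∃ c : ℕ → R, c n = r ∧
      (∑ i ∈ Finset.range (n + 1), f (c i) * x ^ i) ∈ I} with hT
  have hzero : (0 : R) ∈ T := ⟨fun _ => 0, rfl, by simp [I.zero_mem]⟩
  have hadd : ∀ {r s : R}, r ∈ T → s ∈ T → r + s ∈ T := by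
    rintro r s ⟨c, hc, hcI⟩ ⟨c', hc', hc'I⟩
    refine ⟨fun i => c i + c' i, by simp [hc, hc'], ?_⟩
    have : ∀ i : ℕ, f (c i + c' i) * x ^ i = f (c i) * x ^ i + f (c' i) * x ^ i := by
      intro i; rw [map_add, add_mul]
    simp_rw [this]
    rw [Finset.sum_add_distrib]
    exact I.add_mem hcI hc'I
  have hneg : ∀ {r : R}, r ∈ T → -r ∈ T := by
    rintro r ⟨c, hc, hcI⟩
    refine ⟨fun i => -(c i), by simp [hc], ?_⟩
    have : ∀ i : ℕ, f (-(c i)) * x ^ i = -(f (c i) * x ^ i) := by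
      intro i; rw [map_neg, neg_mul]
    simp_rw [this]
    rw [Finset.sum_neg_distrib]
    exact I.neg_mem hcI
  have hml : ∀ {r s : R}, s ∈ T → r * s ∈ T := by
    rintro r s ⟨c, hc, hcI⟩
    refine ⟨fun i => r * c i, by simp [hc], ?_⟩
    have : ∀ i : ℕ, f (r * c i) * x ^ i = f r * (f (c i) * x ^ i) := by
      intro i; rw [map_mul, mul_assoc]
    simp_rw [this]
    rw [← Finset.mul_sum]
    exact I.mul_mem_left _ _ hcI
  have hmr : ∀ {r s : R}, r ∈ T → r * s ∈ T := by
    rintro r s ⟨c, hc, hcI⟩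
    obtain ⟨C, hCn, hC⟩ := mulr n c s
    exact ⟨C, by rw [hCn, hc], by rw [← hC]; exact I.mul_mem_right _ _ hcI⟩
  set J : TwoSidedIdeal R := TwoSidedIdeal.mk' T hzero hadd hneg hml hmr with hJ
  have memJ : ∀ r : R, r ∈ J ↔ r ∈ T := fun r =>
    TwoSidedIdeal.mem_mk' T hzero hadd hneg hml hmr r
  -- J is δ-invariant
  have hδJ : ∀ r ∈ J, δ r ∈ J := by
    intro r hr
    rw [memJ] at hr ⊢
    obtain ⟨c, hc, hcI⟩ := hr
    refine ⟨fun i => δ (c i), by simp [hc], ?_⟩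
    have key : x * (∑ i ∈ Finset.range (n + 1), f (c i) * x ^ i)
        - (∑ i ∈ Finset.range (n + 1), f (c i) * x ^ i) * x
        = ∑ i ∈ Finset.range (n + 1), f (δ (c i)) * x ^ i := by
      rw [Finset.mul_sum, Finset.sum_mul]
      have h6 : ∀ i, x * (f (c i) * x ^ i) = f (c i) * x ^ i * x + f (δ (c i)) * x ^ i := by
        intro i
        rw [← mul_assoc, rel, add_mul, mul_assoc, mul_assoc, ← pow_succ', ← pow_succ]
      simp_rw [h6]
      rw [Finset.sum_add_distrib]
      abel
    rw [← key]
    exact I.sub_mem (I.mul_mem_left _ _ hcI) (I.mul_mem_right _ _ hcI)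
  have haJ : a n ∈ J := by
    rw [memJ]
    exact ⟨a, rfl, by rw [← hrep]; exact TwoSidedIdeal.subset_span rfl⟩
  rcases hdsimple J hδJ with hbot | htop
  · exfalso
    rw [hbot, TwoSidedIdeal.mem_bot] at haJ
    exact hlead haJ
  · have h1 : (1 : R) ∈ J := by rw [htop]; exact TwoSidedIdeal.mem_top _
    rw [memJ] at h1
    obtain ⟨c, hc, hcI⟩ := h1
    exact ⟨c, hc, hcI⟩
end
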